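/- Let Γ be a finite (not necessarily abelian) additive group of order 2a and let F be a 2-regular graph with vertex set Γ ∪ {∞₁} (where ∞₁ ∉ Γ). Suppose F + a' = F for some element a' of Γ with 2a' = 0 and a' ≠ 0 (here F + γ denotes the graph obtained by replacing each vertex x ≠ ∞₁ by x + γ), and suppose the list of differences ΔF = {x − y : x, y ∈ Γ, {x,y} ∈ E(F)} contains every nonzero element of Γ. Then the set {F + γ : γ ∈ Γ} is a 2-factorization of the complete graph on Γ ∪ {∞₁}. -/

import Mathlib

/-- The translate `F + γ` of a graph on `Γ ∪ {∞₁}`: each vertex `some x` is replaced by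
`some (x + γ)` and `∞₁ = none` is fixed. -/
def translateO {n : ℕ} (F : SimpleGraph (Option (ZMod n))) (γ : ZMod n) :
    SimpleGraph (Option (ZMod n)) :=
  F.map (Equiv.optionCongr (Equiv.addRight γ)).toEmbedding

lemma translateO_adj {n : ℕ} (F : SimpleGraph (Option (ZMod n))) (γ : ZMod n)
    (u v : Option (ZMod n)) :
    (translateO F γ).Adj u v ↔
      F.Adj (u.map (· - γ)) (v.map (· - γ)) := by
  constructor
  · rintro ⟨-, u', v', h, rfl, rfl⟩
    have h1 : ∀ w : Option (ZMod n),
        ((Equiv.optionCongr (Equiv.addRight γ)).toEmbedding w).map (· - γ) = w := by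
      intro w; cases w <;> simp
    rw [h1, h1]; exact h
  · intro h
    have h1 : ∀ w : Option (ZMod n),
        (Equiv.optionCongr (Equiv.addRight γ)).toEmbedding (w.map (· - γ)) = w := by
      intro w; cases w <;> simp
    exact ⟨fun huv => F.ne_of_adj h (by rw [huv]), u.map (· - γ), v.map (· - γ), h, h1 u, h1 v⟩

/-- Buratti–Rinaldi 1-rotational construction (cyclic case): if `F` is a 2-regular graph on
`Z_{2a} ∪ {∞₁}`, invariant under translation by an involution `a' ≠ 0`, and its list of
differences contains every nonzero element, then `{F + γ : γ ∈ Z_{2a}}` is a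
2-factorization of the complete graph on `Z_{2a} ∪ {∞₁}`. -/
theorem stmt0 (a : ℕ) (ha : 0 < a)
    (F : SimpleGraph (Option (ZMod (2 * a))))
    (h2reg : ∀ v, (F.neighborSet v).ncard = 2)
    (a' : ZMod (2 * a)) (ha0 : a' ≠ 0) (ha2 : a' + a' = 0)
    (hper : translateO F a' = F)
    (hdiff : ∀ d : ZMod (2 * a), d ≠ 0 →
      ∃ x y : ZMod (2 * a), F.Adj (some x) (some y) ∧ x - y = d) :
    (∀ γ : ZMod (2 * a), ∀ v, ((translateO F γ).neighborSet v).ncard = 2) ∧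
    (∀ e ∈ (⊤ : SimpleGraph (Option (ZMod (2 * a)))).edgeSet,
      ∃! H : SimpleGraph (Option (ZMod (2 * a))),
        (∃ γ : ZMod (2 * a), H = translateO F γ) ∧ e ∈ H.edgeSet) := by
  classical
  haveI : NeZero (2 * a) := ⟨by omega⟩
  -- negation of a' is a'
  have hneg : -a' = a' := by linear_combination -ha2
  -- periodicity of F at the level of adjacency
  have hperiodic : ∀ u v : Option (ZMod (2 * a)), F.Adj u v →
      F.Adj (u.map (· + a')) (v.map (· + a')) := by
    intro u v h
    rw [← hper, translateO_adj]
    have h1 : ∀ w : Option (ZMod (2 * a)), (w.map (· + a')).map (· - a') = w := by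
      intro w; cases w <;> simp
    rw [h1, h1]; exact h
  have hpS : ∀ x y : ZMod (2 * a), F.Adj (some x) (some y) →
      F.Adj (some (x + a')) (some (y + a')) := by
    intro x y h; exact hperiodic (some x) (some y) h
  have hpN : ∀ x : ZMod (2 * a), F.Adj none (some x) → F.Adj none (some (x + a')) := by
    intro x h; exact hperiodic none (some x) h
  -- Part 1 : every translate is 2-regular
  have part1 : ∀ γ : ZMod (2 * a), ∀ v, ((translateO F γ).neighborSet v).ncard = 2 := by
    intro γ v
    have himg : (translateO F γ).neighborSet v
        = (fun w : Option (ZMod (2 * a)) => w.map (· + γ)) '' F.neighborSet (v.map (· - γ)) := by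
      ext w
      simp only [SimpleGraph.mem_neighborSet, Set.mem_image, translateO_adj]
      constructor
      · intro h
        exact ⟨w.map (· - γ), h, by cases w <;> simp⟩
      · rintro ⟨z, hz, rfl⟩
        have hzz : (Option.map (· + γ) z).map (· - γ) = z := by cases z <;> simp
        rw [hzz]; exact hz
    have hinj : Function.Injective (fun w : Option (ZMod (2 * a)) => w.map (· + γ)) :=
      Option.map_injective (add_left_injective γ)
    rw [himg, Set.ncard_image_of_injective _ hinj]
    exact h2reg _
  -- degrees as finset cards
  have hdeg : ∀ v, (F.neighborFinset v).card = 2 := by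
    intro v
    rw [SimpleGraph.neighborFinset_def, ← Set.ncard_eq_toFinset_card']
    exact h2reg v
  -- neighbors of ∞
  set Ninf : Finset (ZMod (2 * a)) := Finset.univ.filter (fun x => F.Adj none (some x)) with hNinf
  have hNinfcard : Ninf.card = 2 := by
    have himg : Ninf.image some = F.neighborFinset none := by
      ext w
      cases w with
      | none => simp [hNinf]
      | some y => simp [hNinf]
    have := Finset.card_image_of_injective Ninf (Option.some_injective _)
    rw [himg] at this
    rw [← this, hdeg]
  have keyInf : ∀ x₁ x₂ : ZMod (2 * a), F.Adj none (some x₁) → F.Adj none (some x₂) →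
      x₂ = x₁ ∨ x₂ = x₁ + a' := by
    intro x₁ x₂ h₁ h₂
    have hm1 : x₁ ∈ Ninf := by simp [hNinf, h₁]
    have hm1' : x₁ + a' ∈ Ninf := by simp [hNinf, hpN x₁ h₁]
    have hne : x₁ ≠ x₁ + a' := by
      intro h; exact ha0 (by linear_combination -h)
    have hsub : ({x₁, x₁ + a'} : Finset (ZMod (2 * a))) ⊆ Ninf := by
      intro z hz
      rcases Finset.mem_insert.mp hz with rfl | hz
      · exact hm1
      · rw [Finset.mem_singleton.mp hz]; exact hm1'
    have hpair : ({x₁, x₁ + a'} : Finset (ZMod (2 * a))).card = 2 := Finset.card_pair hne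
    have heq : ({x₁, x₁ + a'} : Finset (ZMod (2 * a))) = Ninf :=
      Finset.eq_of_subset_of_card_le hsub (by rw [hNinfcard, hpair])
    have hm2 : x₂ ∈ ({x₁, x₁ + a'} : Finset (ZMod (2 * a))) := by
      rw [heq]; simp [hNinf, h₂]
    rcases Finset.mem_insert.mp hm2 with h | h
    · exact Or.inl h
    · exact Or.inr (Finset.mem_singleton.mp h)
  -- counting ordered pairs of adjacent elements of Γ
  set P : Finset (ZMod (2 * a) × ZMod (2 * a)) := Finset.univ.filter (fun p => F.Adj (some p.1) (some p.2)) with hP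
  have hY : ∀ x : ZMod (2 * a),
      (Finset.univ.filter (fun y => F.Adj (some x) (some y))).card
        + (if F.Adj (some x) none then 1 else 0) = 2 := by
    intro x
    set Y := Finset.univ.filter (fun y => F.Adj (some x) (some y)) with hYdef
    have himg : Y.image some = (F.neighborFinset (some x)).erase none := by
      ext w
      cases w with
      | none => simp [hYdef]
      | some y => simp [hYdef]
    have hcardim := Finset.card_image_of_injective Y (Option.some_injective _)
    rw [himg] at hcardim
    rw [← hcardim, Finset.card_erase_eq_ite]
    by_cases hx : F.Adj (some x) none
    · have : none ∈ F.neighborFinset (some x) := by simpa using hx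
      rw [if_pos this, if_pos hx, hdeg]
    · have : none ∉ F.neighborFinset (some x) := by simpa using hx
      rw [if_neg this, if_neg hx, hdeg]
  have hPcard : P.card = 4 * a - 2 := by
    have hfib : P.card = ∑ x : ZMod (2 * a),
        (P.filter (fun p => p.1 = x)).card :=
      Finset.card_eq_sum_card_fiberwise (fun p _ => Finset.mem_univ p.1)
    have hfibx : ∀ x : ZMod (2 * a), (P.filter (fun p => p.1 = x)).card
        = (Finset.univ.filter (fun y => F.Adj (some x) (some y))).card := by
      intro x
      have : P.filter (fun p => p.1 = x)
          = (Finset.univ.filter (fun y => F.Adj (some x) (some y))).image (fun y => (x, y)) := by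
        ext ⟨p1, p2⟩
        simp only [hP, Finset.mem_filter, Finset.mem_univ, true_and, Finset.mem_image]
        constructor
        · rintro ⟨hadj, rfl⟩; exact ⟨p2, hadj, rfl⟩
        · rintro ⟨y, hy, h⟩
          obtain ⟨rfl, rfl⟩ := Prod.mk.injEq .. ▸ h
          exact ⟨hy, rfl⟩
      rw [this, Finset.card_image_of_injective]
      intro y₁ y₂ h
      simpa using h
    have hNcomm : (Finset.univ.filter (fun x : ZMod (2 * a) => F.Adj (some x) none)) = Ninf := by
      ext x; simp [hNinf, SimpleGraph.adj_comm]
    have hsum2 : ∑ x : ZMod (2 * a), ((P.filter (fun p => p.1 = x)).card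
        + (if F.Adj (some x) none then 1 else 0)) = 2 * (2 * a) := by
      have : ∀ x : ZMod (2 * a), (P.filter (fun p => p.1 = x)).card
          + (if F.Adj (some x) none then 1 else 0) = 2 := by
        intro x; rw [hfibx x]; exact hY x
      rw [Finset.sum_congr rfl (fun x _ => this x), Finset.sum_const, smul_eq_mul]
      simp [ZMod.card, mul_comm]
    rw [Finset.sum_add_distrib] at hsum2
    have hchi : ∑ x : ZMod (2 * a), (if F.Adj (some x) none then 1 else 0) = 2 := by
      rw [← Finset.card_filter, hNcomm, hNinfcard]
    rw [hchi, ← hfib] at hsum2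
    omega
  -- every nonzero difference is realized exactly twice among ordered pairs
  set D : Finset (ZMod (2 * a)) := Finset.univ.filter (fun d => d ≠ 0) with hD
  have hDcard : D.card = 2 * a - 1 := by
    rw [hD, Finset.filter_ne' Finset.univ 0, Finset.card_erase_of_mem (Finset.mem_univ 0)]
    simp [ZMod.card]
  have hfib2 : ∀ d ∈ D, 2 ≤ (P.filter (fun p => p.1 - p.2 = d)).card := by
    intro d hd
    have hd0 : d ≠ 0 := by simpa [hD] using hd
    obtain ⟨x, y, hadj, hxy⟩ := hdiff d hd0
    have h1 : (x, y) ∈ P.filter (fun p => p.1 - p.2 = d) := by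
      simp [hP, hadj, hxy]
    have h2 : (x + a', y + a') ∈ P.filter (fun p => p.1 - p.2 = d) := by
      have : x + a' - (y + a') = d := by linear_combination hxy
      simp [hP, hpS x y hadj, this]
    have hne : (x, y) ≠ (x + a', y + a') := by
      intro h
      have := congrArg Prod.fst h
      exact ha0 (by simpa using (by linear_combination -this : a' = 0))
    have hsub : ({(x, y), (x + a', y + a')} : Finset (ZMod (2 * a) × ZMod (2 * a)))
        ⊆ P.filter (fun p => p.1 - p.2 = d) := by
      intro z hz
      rcases Finset.mem_insert.mp hz with rfl | hz
      · exact h1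
      · rw [Finset.mem_singleton.mp hz]; exact h2
    calc 2 = ({(x, y), (x + a', y + a')} : Finset (ZMod (2 * a) × ZMod (2 * a))).card :=
            (Finset.card_pair hne).symm
      _ ≤ _ := Finset.card_le_card hsub
  have hsumD : ∑ d ∈ D, (P.filter (fun p => p.1 - p.2 = d)).card = P.card := by
    symm
    apply Finset.card_eq_sum_card_fiberwise
    intro p hp
    have hadj : F.Adj (some p.1) (some p.2) := by simpa [hP] using hp
    have : p.1 ≠ p.2 := by
      intro h; exact F.ne_of_adj hadj (by rw [h])
    simp [hD, sub_ne_zero.mpr this]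
  have hfibeq : ∀ d ∈ D, (P.filter (fun p => p.1 - p.2 = d)).card = 2 := by
    by_contra hcon
    push_neg at hcon
    obtain ⟨d, hd, hne⟩ := hcon
    have h3 : 2 < (P.filter (fun p => p.1 - p.2 = d)).card :=
      lt_of_le_of_ne (hfib2 d hd) (Ne.symm hne)
    have hlt : ∑ _d ∈ D, 2 < ∑ d ∈ D, (P.filter (fun p => p.1 - p.2 = d)).card :=
      Finset.sum_lt_sum (fun i hi => hfib2 i hi) ⟨d, hd, h3⟩
    rw [Finset.sum_const, smul_eq_mul, hsumD, hPcard, hDcard] at hlt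
    omega
  -- the key rigidity lemma
  have key : ∀ x₁ y₁ x₂ y₂ : ZMod (2 * a), F.Adj (some x₁) (some y₁) → F.Adj (some x₂) (some y₂) →
      x₁ - y₁ = x₂ - y₂ → (x₂ = x₁ ∧ y₂ = y₁) ∨ (x₂ = x₁ + a' ∧ y₂ = y₁ + a') := by
    intro x₁ y₁ x₂ y₂ h₁ h₂ hdif
    set d := x₁ - y₁ with hd
    have hd0 : d ≠ 0 := by
      rw [hd]
      refine sub_ne_zero.mpr ?_
      intro h
      exact F.ne_of_adj h₁ (by rw [h])
    have hdD : d ∈ D := by simp [hD, hd0]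
    have hm1 : (x₁, y₁) ∈ P.filter (fun p => p.1 - p.2 = d) := by simp [hP, h₁, hd]
    have hm1' : (x₁ + a', y₁ + a') ∈ P.filter (fun p => p.1 - p.2 = d) := by
      have : x₁ + a' - (y₁ + a') = d := by rw [hd]; ring
      simp [hP, hpS x₁ y₁ h₁, this]
    have hm2 : (x₂, y₂) ∈ P.filter (fun p => p.1 - p.2 = d) := by
      simp [hP, h₂, ← hdif, hd]
    have hne : (x₁, y₁) ≠ (x₁ + a', y₁ + a') := by
      intro h
      have := congrArg Prod.fst h
      exact ha0 (by simpa using (by linear_combination -this : a' = 0))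
    have hsub : ({(x₁, y₁), (x₁ + a', y₁ + a')} : Finset (ZMod (2 * a) × ZMod (2 * a)))
        ⊆ P.filter (fun p => p.1 - p.2 = d) := by
      intro z hz
      rcases Finset.mem_insert.mp hz with rfl | hz
      · exact hm1
      · rw [Finset.mem_singleton.mp hz]; exact hm1'
    have heq : ({(x₁, y₁), (x₁ + a', y₁ + a')} : Finset (ZMod (2 * a) × ZMod (2 * a)))
        = P.filter (fun p => p.1 - p.2 = d) :=
      Finset.eq_of_subset_of_card_le hsub
        (by rw [hfibeq d hdD, Finset.card_pair hne])
    rw [← heq] at hm2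
    rcases Finset.mem_insert.mp hm2 with h | h
    · left; exact ⟨congrArg Prod.fst h, congrArg Prod.snd h⟩
    · right
      have := Finset.mem_singleton.mp h
      exact ⟨congrArg Prod.fst this, congrArg Prod.snd this⟩
  -- translating by a' does not change a translate
  have hshift : ∀ γ : ZMod (2 * a), translateO F (γ + a') = translateO F γ := by
    intro γ
    ext u v
    rw [translateO_adj, translateO_adj]
    have hm : ∀ w : Option (ZMod (2 * a)), (w.map (· - (γ + a'))).map (· + a') = w.map (· - γ) := by
      intro w
      cases w with
      | none => simp
      | some x =>
        simp only [Option.map_some, Option.map_map, Function.comp]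
        congr 1
        ring
    have hm' : ∀ w : Option (ZMod (2 * a)), (w.map (· - γ)).map (· + a') = w.map (· - (γ + a')) := by
      intro w
      cases w with
      | none => simp
      | some x =>
        simp only [Option.map_some, Option.map_map, Function.comp]
        congr 1
        linear_combination ha2
    constructor
    · intro h
      have := hperiodic _ _ h
      rwa [hm, hm] at this
    · intro h
      have := hperiodic _ _ h
      rwa [hm', hm'] at this
  -- uniqueness of the translate through a given edge
  have huniq : ∀ (γ₁ γ₂ : ZMod (2 * a)) (u v : Option (ZMod (2 * a))),
      (translateO F γ₁).Adj u v → (translateO F γ₂).Adj u v →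
      translateO F γ₂ = translateO F γ₁ := by
    have main : ∀ (γ₁ γ₂ : ZMod (2 * a)), γ₂ = γ₁ ∨ γ₂ = γ₁ + a' → translateO F γ₂ = translateO F γ₁ := by
      rintro γ₁ γ₂ (rfl | rfl)
      · rfl
      · exact hshift γ₁
    intro γ₁ γ₂ u v h₁ h₂
    rw [translateO_adj] at h₁ h₂
    apply main
    cases u with
    | none =>
      cases v with
      | none => exact absurd h₁ (F.loopless.irrefl none)
      | some y =>
        simp only [Option.map_none, Option.map_some] at h₁ h₂
        rcases keyInf _ _ h₁ h₂ with h | h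
        · left; linear_combination -h
        · right; linear_combination hneg - h
    | some x =>
      cases v with
      | none =>
        simp only [Option.map_none, Option.map_some] at h₁ h₂
        rcases keyInf _ _ h₁.symm h₂.symm with h | h
        · left; linear_combination -h
        · right; linear_combination hneg - h
      | some y =>
        simp only [Option.map_some] at h₁ h₂
        rcases key _ _ _ _ h₁ h₂ (by ring) with ⟨h, -⟩ | ⟨h, -⟩
        · left; linear_combination -h
        · right; linear_combination hneg - h
  refine ⟨part1, ?_⟩
  intro e he
  induction e with
  | _ u v =>
    rw [SimpleGraph.mem_edgeSet, SimpleGraph.top_adj] at he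
    -- existence of a translate containing the edge
    have hex : ∃ γ : ZMod (2 * a), (translateO F γ).Adj u v := by
      cases u with
      | none =>
        cases v with
        | none => exact absurd rfl he
        | some y =>
          obtain ⟨x₀, hx₀⟩ := Finset.card_pos.mp (by rw [hNinfcard]; norm_num : 0 < Ninf.card)
          have hx₀adj : F.Adj none (some x₀) := by simpa [hNinf] using hx₀
          refine ⟨y - x₀, ?_⟩
          rw [translateO_adj]
          simpa using hx₀adj
      | some x =>
        cases v with
        | none =>
          obtain ⟨x₀, hx₀⟩ := Finset.card_pos.mp (by rw [hNinfcard]; norm_num : 0 < Ninf.card)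
          have hx₀adj : F.Adj none (some x₀) := by simpa [hNinf] using hx₀
          refine ⟨x - x₀, ?_⟩
          rw [translateO_adj]
          simpa using hx₀adj.symm
        | some y =>
          have hxy : x ≠ y := fun h => he (by rw [h])
          obtain ⟨x₀, y₀, hadj, hd⟩ := hdiff (x - y) (sub_ne_zero.mpr hxy)
          refine ⟨x - x₀, ?_⟩
          rw [translateO_adj]
          simp only [Option.map_some]
          have h1 : x - (x - x₀) = x₀ := by ring
          have h2 : y - (x - x₀) = y₀ := by linear_combination hd
          rw [h1, h2]
          exact hadj
    obtain ⟨γ, hγ⟩ := hex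
    refine ⟨translateO F γ, ⟨⟨γ, rfl⟩, (SimpleGraph.mem_edgeSet _).mpr hγ⟩, ?_⟩
    rintro H ⟨⟨γ', rfl⟩, hH⟩
    rw [SimpleGraph.mem_edgeSet] at hH
    exact huniq γ γ' u v hγ hH
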